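/- arXiv:1711.10456 — 9 statements merged into one kernel-verified Lean document; each statement's English description precedes it below -/
import Mathlib

section
/- Let A = [[a,b],[1,0]] be a 2×2 real matrix with eigenvalues μ₁, μ₂. Then for any natural number t, (μ₁ - 1)(μ₂ - 1) · (e₁ᵀ (∑_{τ=0}^{t-1} A^τ) e₁) = 1 - e₁ᵀ A^t (e₁ + e₂), where e₁ = (1,0)ᵀ and e₂ = (0,1)ᵀ. -/
open Matrix

lemma companion_real_aux (a b : ℝ) (A : Matrix (Fin 2) (Fin 2) ℝ)
    (hA : A = !![a, b; 1, 0]) (t : ℕ) :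
    (1 - a - b) * ((∑ τ ∈ Finset.range t, A ^ τ) 0 0) =
      1 - (A ^ t) 0 0 - (A ^ t) 0 1 := by
  induction t with
  | zero => simp [Matrix.one_apply]
  | succ t ih =>
      have h00 : (A ^ (t+1)) 0 0 = (A ^ t) 0 0 * a + (A ^ t) 0 1 := by
        rw [pow_succ, Matrix.mul_apply, Fin.sum_univ_two, hA]
        simp
      have h01 : (A ^ (t+1)) 0 1 = (A ^ t) 0 0 * b := by
        rw [pow_succ, Matrix.mul_apply, Fin.sum_univ_two, hA]
        simp
      rw [Finset.sum_range_succ, Matrix.add_apply, h00, h01]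
      nlinarith [ih]

theorem companion_partial_sum_identity (a b : ℝ) (μ₁ μ₂ : ℂ)
    (hsum : μ₁ + μ₂ = (a : ℂ)) (hprod : μ₁ * μ₂ = -(b : ℂ))
    (A : Matrix (Fin 2) (Fin 2) ℝ) (hA : A = !![a, b; 1, 0]) (t : ℕ) :
    (μ₁ - 1) * (μ₂ - 1) * (((∑ τ ∈ Finset.range t, A ^ τ) 0 0 : ℝ) : ℂ) =
      1 - ((((A ^ t) 0 0 : ℝ) : ℂ) + (((A ^ t) 0 1 : ℝ) : ℂ)) := by
  have key := companion_real_aux a b A hA t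
  have h1 : (μ₁ - 1) * (μ₂ - 1) = ((1 - a - b : ℝ) : ℂ) := by
    push_cast
    linear_combination hprod - hsum
  rw [h1, ← Complex.ofReal_mul, key]
  push_cast
  ring
end

section
/- Let θ ∈ (0, 1/4] and x ∈ [-1/4, θ²/(2-θ)²], and let μ₁ ≥ μ₂ be the two real roots of μ² - (2-θ)(1-x)μ + (1-θ)(1-x) = 0. Then μ₁ ≤ 1 + 2·min{|x|/θ, √|x|}. -/
set_option maxHeartbeats 1000000 in
theorem agd_large_eigenvalue_upper_bound (θ x μ₁ μ₂ : ℝ) (hθ : 0 < θ) (hθ' : θ ≤ 1/4)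
    (hx : -(1/4) ≤ x) (hx' : x ≤ θ ^ 2 / (2 - θ) ^ 2)
    (hroot₁ : μ₁ ^ 2 - (2 - θ) * (1 - x) * μ₁ + (1 - θ) * (1 - x) = 0)
    (hroot₂ : μ₂ ^ 2 - (2 - θ) * (1 - x) * μ₂ + (1 - θ) * (1 - x) = 0)
    (hle : μ₂ ≤ μ₁)
    (hmax : ∀ μ : ℝ, μ ^ 2 - (2 - θ) * (1 - x) * μ + (1 - θ) * (1 - x) = 0 → μ ≤ μ₁) :
    μ₁ ≤ 1 + 2 * min (|x| / θ) (Real.sqrt |x|) := by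
  clear hroot₂ hle hmax hx'
  set r₂ : ℝ := (2 - θ) * (1 - x) - μ₁ with hr₂
  have hfact : ∀ t : ℝ, t ^ 2 - (2 - θ) * (1 - x) * t + (1 - θ) * (1 - x)
      = (t - μ₁) * (t - r₂) := by
    intro t
    rw [hr₂]
    linear_combination hroot₁
  have hmin0 : (0:ℝ) ≤ min (|x| / θ) (Real.sqrt |x|) :=
    le_min (by positivity) (Real.sqrt_nonneg _)
  by_cases h1 : μ₁ ≤ 1
  · linarith
  push_neg at h1
  have hkey : (1 - μ₁) * (1 - r₂) = x := by
    have := hfact 1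
    linarith [this]
  -- x must be negative
  have hxneg : x < 0 := by
    by_contra hxn
    push_neg at hxn
    have hprod : μ₁ * r₂ = (1 - θ) * (1 - x) := by
      rw [hr₂]; linear_combination -hroot₁
    rcases le_or_gt 1 r₂ with hr | hr
    · have h2 : 1 < μ₁ * r₂ := by nlinarith
      have h3 : (1 - θ) * (1 - x) ≤ 1 := by nlinarith
      linarith
    · have h4 : (1 - μ₁) * (1 - r₂) < 0 :=
        mul_neg_of_neg_of_pos (by linarith) (by linarith)
      linarith
  set u : ℝ := Real.sqrt (-x) with hu
  have hu2 : u ^ 2 = -x := Real.sq_sqrt (by linarith)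
  have hupos : 0 < u := Real.sqrt_pos.mpr (by linarith)
  have hule : u ≤ 1/2 := by nlinarith [hu2, Real.sqrt_nonneg (-x)]
  have hxe : x = -(u ^ 2) := by linarith
  -- r₂ ≤ 1 - θ/2
  have hA : r₂ ≤ 1 - θ/2 := by
    have hfA := hfact (1 - θ/2)
    have hAle : (1 - θ/2 - μ₁) * (1 - θ/2 - r₂) ≤ 0 := by
      rw [← hfA]
      have h5 : x * (1 - θ + θ^2/2) < 0 :=
        mul_neg_of_neg_of_pos hxneg (by nlinarith)
      nlinarith [h5, sq_nonneg θ]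
    nlinarith [hAle]
  -- r₂ ≤ 1 - u/2
  have hB : r₂ ≤ 1 - u/2 := by
    have hfB := hfact (1 - u/2)
    have hBle : (1 - u/2 - μ₁) * (1 - u/2 - r₂) ≤ 0 := by
      rw [← hfB, hxe]
      have h3 : 0 ≤ (3/4 - u) * u^2 := by nlinarith [sq_nonneg u]
      have h4 : 0 ≤ θ * u / 2 * (1 + u^2) := by positivity
      have heq : (1 - u/2)^2 - (2 - θ) * (1 - -(u^2)) * (1 - u/2) + (1 - θ) * (1 - -(u^2))
          = -((3/4 - u) * u^2 + θ * u / 2 * (1 + u^2)) := by ring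
      rw [heq]
      linarith [h3, h4]
    nlinarith [hBle, hupos, hule]
  -- bounds on μ₁ - 1
  have hkey' : (μ₁ - 1) * (1 - r₂) = -x := by linear_combination -hkey
  have HA : 0 ≤ (μ₁ - 1) * ((1 - θ/2) - r₂) :=
    mul_nonneg (by linarith) (by linarith)
  have HB : 0 ≤ (μ₁ - 1) * ((1 - u/2) - r₂) :=
    mul_nonneg (by linarith) (by linarith)
  have hb1 : (μ₁ - 1) * θ ≤ 2 * (-x) := by nlinarith [HA, hkey']
  have hb2 : μ₁ - 1 ≤ 2 * u := by
    have h7 : (μ₁ - 1) * u ≤ (2 * u) * u := by nlinarith [HB, hkey', hu2]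
    exact le_of_mul_le_mul_right h7 hupos
  have habs : |x| = -x := abs_of_neg hxneg
  rw [habs]
  rcases le_total (-x / θ) u with h | h
  · rw [min_eq_left h]
    have hb1' : μ₁ - 1 ≤ 2 * (-x) / θ := (le_div_iff₀ hθ).mpr (by linarith)
    have : 2 * (-x) / θ = 2 * (-x / θ) := by ring
    linarith [this ▸ hb1']
  · rw [min_eq_right h]
    linarith [hb2]
end

section
/- Let θ ∈ (0, 1/4] and x ∈ [-1/4, 0], and let μ₁ ≥ μ₂ be the two real roots of μ² - (2-θ)(1-x)μ + (1-θ)(1-x) = 0. Then μ₁ ≥ 1 + (1/2)·min{|x|/θ, √|x|}. -/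
/-- If `p(t) ≤ 0` for the monic quadratic `p(μ) = μ² - bμ + c` whose largest root is `μ₁`,
then `t ≤ μ₁`. -/
lemma agd_aux_root_bound (b c μ₁ t : ℝ)
    (hroot₁ : μ₁ ^ 2 - b * μ₁ + c = 0)
    (hmax : ∀ μ : ℝ, μ ^ 2 - b * μ + c = 0 → μ ≤ μ₁)
    (h : t ^ 2 - b * t + c ≤ 0) : t ≤ μ₁ := by
  have hD : (μ₁ - b/2)^2 = b^2/4 - c := by nlinarith
  have hDpos : 0 ≤ b^2/4 - c := hD ▸ sq_nonneg _
  have hsq : Real.sqrt (b^2/4 - c) ^ 2 = b^2/4 - c := Real.sq_sqrt hDpos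
  have hr : b/2 + Real.sqrt (b^2/4 - c) ≤ μ₁ :=
    hmax (b/2 + Real.sqrt (b^2/4 - c)) (by nlinarith)
  have hb2 : b/2 ≤ μ₁ := by nlinarith [Real.sqrt_nonneg (b^2/4 - c)]
  nlinarith [sq_nonneg (t - μ₁)]

/-- Case A: the quadratic is nonpositive at `1 + m/2` when `m = -x/θ` and `m ≤ θ`. -/
lemma agd_aux_caseA (θ m : ℝ) (hθ : 0 < θ) (hθ' : θ ≤ 1/4) (hm0 : 0 ≤ m) (hmθ : m ≤ θ) :
    (1 + 1/2*m)^2 - (2-θ)*(1-(-(θ*m)))*(1+1/2*m) + (1-θ)*(1-(-(θ*m))) ≤ 0 := by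
  have key : m/4 + θ^2*m/2 - θ*m ≤ θ/2 := by nlinarith
  nlinarith [mul_le_mul_of_nonneg_left key hm0]

/-- Case B: the quadratic is nonpositive at `1 + s/2` when `s² = -x` and `θs ≤ s²`. -/
lemma agd_aux_caseB (θ s : ℝ) (hθ : 0 < θ) (hθ' : θ ≤ 1/4) (hs0 : 0 ≤ s) (hsle : s ≤ 1/2)
    (hcase : θ * s ≤ s^2) :
    (1 + 1/2*s)^2 - (2-θ)*(1-(-(s^2)))*(1+1/2*s) + (1-θ)*(1-(-(s^2))) ≤ 0 := by
  nlinarith [mul_le_mul_of_nonneg_left hcase hs0,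
    mul_le_mul_of_nonneg_left hcase (mul_nonneg hs0 hs0),
    mul_nonneg (mul_nonneg hs0 hs0) hs0, sq_nonneg s]

theorem agd_large_eigenvalue_lower_bound (θ x μ₁ μ₂ : ℝ) (hθ : 0 < θ) (hθ' : θ ≤ 1/4)
    (hx : -(1/4) ≤ x) (hx' : x ≤ 0)
    (hroot₁ : μ₁ ^ 2 - (2 - θ) * (1 - x) * μ₁ + (1 - θ) * (1 - x) = 0)
    (hroot₂ : μ₂ ^ 2 - (2 - θ) * (1 - x) * μ₂ + (1 - θ) * (1 - x) = 0)
    (hle : μ₂ ≤ μ₁)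
    (hmax : ∀ μ : ℝ, μ ^ 2 - (2 - θ) * (1 - x) * μ + (1 - θ) * (1 - x) = 0 → μ ≤ μ₁) :
    1 + (1/2) * min (|x| / θ) (Real.sqrt |x|) ≤ μ₁ := by
  apply agd_aux_root_bound ((2 - θ) * (1 - x)) ((1 - θ) * (1 - x)) μ₁ _ hroot₁ hmax
  have hxabs : |x| = -x := abs_of_nonpos hx'
  have hs0 : 0 ≤ Real.sqrt |x| := Real.sqrt_nonneg _
  have hs2 : Real.sqrt |x| ^ 2 = -x := by rw [Real.sq_sqrt (abs_nonneg x), hxabs]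
  have hsle : Real.sqrt |x| ≤ 1/2 := by nlinarith
  rcases min_cases (|x| / θ) (Real.sqrt |x|) with ⟨hmin, hcase⟩ | ⟨hmin, hcase⟩
  · rw [hmin, hxabs]
    have hm0 : 0 ≤ -x / θ := div_nonneg (by linarith) (le_of_lt hθ)
    have hcase' : -x / θ ≤ Real.sqrt |x| := by rw [← hxabs]; exact hcase
    have hss : Real.sqrt |x| * Real.sqrt |x| ≤ θ * Real.sqrt |x| := by
      have h1 : Real.sqrt |x| * Real.sqrt |x| = θ * (-x / θ) := by
        rw [mul_div_cancel₀ _ (ne_of_gt hθ)]; nlinarith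
      rw [h1]
      exact mul_le_mul_of_nonneg_left hcase' (le_of_lt hθ)
    have hsθ : Real.sqrt |x| ≤ θ := by
      rcases lt_or_eq_of_le hs0 with h | h
      · exact le_of_mul_le_mul_right hss h
      · linarith
    have hmθ : -x / θ ≤ θ := le_trans hcase' hsθ
    have hxm : x = -(θ * (-x / θ)) := by
      rw [mul_div_cancel₀ _ (ne_of_gt hθ)]; ring
    calc (1 + 1/2 * (-x/θ))^2 - (2-θ)*(1-x)*(1 + 1/2*(-x/θ)) + (1-θ)*(1-x)
        = (1 + 1/2*(-x/θ))^2 - (2-θ)*(1-(-(θ*(-x/θ))))*(1+1/2*(-x/θ))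
            + (1-θ)*(1-(-(θ*(-x/θ)))) := by rw [← hxm]
      _ ≤ 0 := agd_aux_caseA θ (-x/θ) hθ hθ' hm0 hmθ
  · rw [hmin]
    have hcase' : θ * Real.sqrt |x| ≤ Real.sqrt |x| ^ 2 := by
      rw [hs2]
      rw [lt_div_iff₀ hθ] at hcase
      linarith [hxabs]
    have hxs : x = -(Real.sqrt |x| ^ 2) := by rw [hs2]; ring
    calc (1 + 1/2 * Real.sqrt |x|)^2 - (2-θ)*(1-x)*(1 + 1/2*Real.sqrt |x|) + (1-θ)*(1-x)
        = (1 + 1/2*Real.sqrt |x|)^2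
            - (2-θ)*(1-(-(Real.sqrt |x| ^ 2)))*(1+1/2*Real.sqrt |x|)
            + (1-θ)*(1-(-(Real.sqrt |x| ^ 2))) := by rw [← hxs]
      _ ≤ 0 := agd_aux_caseB θ (Real.sqrt |x|) hθ hθ' hs0 hsle hcase'
end

section
/- Let θ ∈ (0, 1/4], x ∈ (θ²/(2-θ)², 1/4], and let A = [[(2-θ)(1-x), -(1-θ)(1-x)], [1, 0]]. Write (a_t, -b_t) for the first row of A^t. Then for every natural number t, max{|a_t|, |b_t|} ≤ (t+1)(1-θ)^{t/2}. -/
/-!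
Over `ℂ` the characteristic polynomial `X² - pX + s` of `A = !![p, -s; 1, 0]` factors as
`(X - μ)(X - conj μ)` as soon as `p² ≤ 4s`, and then the first row of `A ^ t` is given by the
complete homogeneous sums `∑ μ^i (conj μ)^(t-i)` (times `-μ conj μ = -s` in the second entry).
Each of their at most `t + 1` terms has norm `|μ|^t = s^(t/2)`, and here `s = (1-θ)(1-x) ≤ 1-θ`.
-/

open Matrix Finset ComplexConjugate

theorem companion_pow_zero_row {R : Type*} [CommRing R] (μ ν : R) (n : ℕ) :
    (!![μ + ν, -(μ * ν); 1, 0] ^ n) 0 0 = ∑ i ∈ range (n + 1), μ ^ i * ν ^ (n - i) ∧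
      (!![μ + ν, -(μ * ν); 1, 0] ^ n) 0 1 =
        -(μ * ν) * ∑ i ∈ range n, μ ^ i * ν ^ (n - 1 - i) := by
  induction n with
  | zero => simp
  | succ n ih =>
    have hsucc := geom_sum₂_succ_eq μ ν (n := n)
    have hsucc' := geom_sum₂_succ_eq μ ν (n := n + 1)
    simp only [add_tsub_cancel_right] at hsucc' ⊢
    rw [pow_succ]
    simp only [mul_apply, Fin.sum_univ_two, ih.1, ih.2, of_apply, cons_val', cons_val_zero,
      cons_val_fin_one, cons_val_one, mul_one, mul_zero, add_zero]
    constructor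
    · linear_combination μ * hsucc - hsucc'
    · ring

theorem norm_pow_mul_pow_sub_le {𝕜 : Type*} [SeminormedRing 𝕜] [NormOneClass 𝕜] {μ ν : 𝕜}
    {r : ℝ} (hμ : ‖μ‖ ≤ r) (hν : ‖ν‖ ≤ r) {i m : ℕ} (hi : i ≤ m) :
    ‖μ ^ i * ν ^ (m - i)‖ ≤ r ^ m := by
  have hr : 0 ≤ r := (norm_nonneg μ).trans hμ
  calc ‖μ ^ i * ν ^ (m - i)‖ ≤ ‖μ‖ ^ i * ‖ν‖ ^ (m - i) :=
        (norm_mul_le _ _).trans (mul_le_mul (norm_pow_le _ _) (norm_pow_le _ _)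
          (norm_nonneg _) (by positivity))
    _ ≤ r ^ i * r ^ (m - i) := by gcongr
    _ = r ^ m := by rw [← pow_add, Nat.add_sub_cancel' hi]

theorem norm_sum_range_pow_mul_pow_sub_le {𝕜 : Type*} [SeminormedRing 𝕜] [NormOneClass 𝕜]
    {μ ν : 𝕜} {r : ℝ} (hμ : ‖μ‖ ≤ r) (hν : ‖ν‖ ≤ r) {n m : ℕ} (hn : n ≤ m + 1) :
    ‖∑ i ∈ range n, μ ^ i * ν ^ (m - i)‖ ≤ n * r ^ m := by
  calc ‖∑ i ∈ range n, μ ^ i * ν ^ (m - i)‖ ≤ ∑ _i ∈ range n, r ^ m :=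
        norm_sum_le_of_le _ fun i hi =>
          norm_pow_mul_pow_sub_le hμ hν (by have := mem_range.mp hi; omega)
    _ = n * r ^ m := by simp

theorem norm_companion_pow_zero_row_le {𝕜 : Type*} [SeminormedCommRing 𝕜] [NormOneClass 𝕜]
    {μ ν : 𝕜} {r : ℝ} (hμ : ‖μ‖ ≤ r) (hν : ‖ν‖ ≤ r) (hr : r ≤ 1) (n : ℕ) (j : Fin 2) :
    ‖(!![μ + ν, -(μ * ν); 1, 0] ^ n) 0 j‖ ≤ (n + 1) * r ^ n := by
  obtain ⟨h00, h01⟩ := companion_pow_zero_row μ ν n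
  fin_cases j
  · simpa [h00] using norm_sum_range_pow_mul_pow_sub_le hμ hν (le_refl (n + 1))
  · have hsum := norm_sum_range_pow_mul_pow_sub_le hμ hν (n := n) (m := n - 1) (by omega)
    have hr0 : 0 ≤ r := (norm_nonneg μ).trans hμ
    have hμν : ‖μ * ν‖ ≤ r := (norm_mul_le _ _).trans
      (by nlinarith [norm_nonneg μ, norm_nonneg ν])
    calc ‖(!![μ + ν, -(μ * ν); 1, 0] ^ n) 0 1‖
        ≤ r * (n * r ^ (n - 1)) := by
          rw [h01]
          exact (norm_mul_le _ _).trans (by rw [norm_neg]; gcongr)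
      _ = n * r ^ n := by
          rcases n with _ | n
          · simp
          · simp only [add_tsub_cancel_right]; ring
      _ ≤ (n + 1) * r ^ n := by gcongr; linarith

theorem Complex.exists_add_conj_mul_conj_of_sq_le {p s : ℝ} (h : p ^ 2 ≤ 4 * s) :
    ∃ μ : ℂ, μ + conj μ = p ∧ μ * conj μ = s ∧ ‖μ‖ = √s := by
  have hnormSq : (p / 2) * (p / 2) + √(4 * s - p ^ 2) / 2 * (√(4 * s - p ^ 2) / 2) = s := by
    nlinarith [Real.mul_self_sqrt (sub_nonneg.mpr h)]
  refine ⟨⟨p / 2, √(4 * s - p ^ 2) / 2⟩, ?_, ?_, ?_⟩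
  · apply Complex.ext <;> simp
  · rw [Complex.mul_conj, Complex.normSq_mk, hnormSq]
  · rw [Complex.norm_def, Complex.normSq_mk, hnormSq]

theorem abs_companion_pow_zero_row_le {p s : ℝ} (hdisc : p ^ 2 ≤ 4 * s) (hs : s ≤ 1) (n : ℕ)
    (j : Fin 2) : |(!![p, -s; 1, 0] ^ n) 0 j| ≤ (n + 1) * √s ^ n := by
  obtain ⟨μ, hsum, hprod, hnorm⟩ := Complex.exists_add_conj_mul_conj_of_sq_le hdisc
  have hmap : (!![p, -s; 1, 0]).map Complex.ofRealHom = !![μ + conj μ, -(μ * conj μ); 1, 0] := by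
    ext i j; fin_cases i <;> fin_cases j <;> simp [hsum, hprod]
  have hentry : ((!![p, -s; 1, 0] ^ n) 0 j : ℂ) = (!![μ + conj μ, -(μ * conj μ); 1, 0] ^ n) 0 j := by
    rw [← hmap, ← Matrix.map_pow]; rfl
  rw [← Real.norm_eq_abs, ← Complex.norm_real, hentry]
  exact norm_companion_pow_zero_row_le hnorm.le (by rw [Complex.norm_conj]; exact hnorm.le)
    (Real.sqrt_le_one.mpr hs) n j

theorem agd_complex_regime_entry_bound (θ x : ℝ) (hθ : 0 < θ) (hθ' : θ ≤ 1/4)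
    (hx : θ ^ 2 / (2 - θ) ^ 2 < x) (hx' : x ≤ 1/4)
    (A : Matrix (Fin 2) (Fin 2) ℝ)
    (hA : A = !![(2 - θ) * (1 - x), -((1 - θ) * (1 - x)); 1, 0]) (t : ℕ) :
    max |(A ^ t) 0 0| |-((A ^ t) 0 1)| ≤ ((t : ℝ) + 1) * (1 - θ) ^ ((t : ℝ) / 2) := by
  subst hA
  have hx0 : 0 ≤ x := le_trans (by positivity) hx.le
  have hxθ : θ ^ 2 ≤ x * (2 - θ) ^ 2 := by
    rw [div_lt_iff₀ (by nlinarith)] at hx; exact hx.le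
  have hdisc : ((2 - θ) * (1 - x)) ^ 2 ≤ 4 * ((1 - θ) * (1 - x)) := by nlinarith
  have hs : (1 - θ) * (1 - x) ≤ 1 - θ := by nlinarith
  have hroot : √((1 - θ) * (1 - x)) ^ t ≤ (1 - θ) ^ ((t : ℝ) / 2) := by
    rw [Real.rpow_div_two_eq_sqrt _ (by linarith), Real.rpow_natCast]
    gcongr
  rw [abs_neg]
  refine max_le ?_ ?_ <;>
    refine (abs_companion_pow_zero_row_le hdisc (by linarith) t _).trans ?_ <;> gcongr
end

section
/- Let θ ∈ (0, 1/4], x ∈ [-1/4, 0], and let A = [[(2-θ)(1-x), -(1-θ)(1-x)], [1, 0]] with real eigenvalues μ₁ ≥ μ₂ ≥ 0. Write (a_t, -b_t) for the first row of A^t. Then for every natural number t, |a_{t+1} - b_{t+1}| ≥ |a_t - b_t|; moreover |a_t - b_t| ≥ (θ/2)·(1 + (1/2)min{|x|/θ, √|x|})^t. -/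
set_option maxHeartbeats 1000000

open Matrix

theorem agd_negative_curvature_growth (θ x : ℝ) (hθ : 0 < θ) (hθ' : θ ≤ 1/4)
    (hx : -(1/4) ≤ x) (hx' : x ≤ 0)
    (A : Matrix (Fin 2) (Fin 2) ℝ)
    (hA : A = !![(2 - θ) * (1 - x), -((1 - θ) * (1 - x)); 1, 0]) (t : ℕ) :
    |(A ^ t) 0 0 + (A ^ t) 0 1| ≤ |(A ^ (t + 1)) 0 0 + (A ^ (t + 1)) 0 1| ∧
    (θ / 2) * (1 + (1/2) * min (|x| / θ) (Real.sqrt |x|)) ^ t ≤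
      |(A ^ t) 0 0 + (A ^ t) 0 1| := by
  set P := (2 - θ) * (1 - x) with hPdef
  set Q := (1 - θ) * (1 - x) with hQdef
  set D := P ^ 2 - 4 * Q with hDdef
  have hxabs : |x| = -x := abs_of_nonpos hx'
  have hD : 0 ≤ D := by rw [hDdef, hPdef, hQdef]; nlinarith [sq_nonneg θ, sq_nonneg x]
  have hsD : Real.sqrt D ^ 2 = D := Real.sq_sqrt hD
  have hsD0 : 0 ≤ Real.sqrt D := Real.sqrt_nonneg D
  set μ1 := (P + Real.sqrt D) / 2 with hμ1def
  set μ2 := (P - Real.sqrt D) / 2 with hμ2def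
  set m := min (|x| / θ) (Real.sqrt |x|) with hmdef
  -- facts about m
  have hm0 : 0 ≤ m := le_min (by positivity) (Real.sqrt_nonneg _)
  have hmθ : m * θ ≤ |x| := by
    have h1 : m ≤ |x| / θ := min_le_left _ _
    calc m * θ ≤ (|x| / θ) * θ := by nlinarith
    _ = |x| := by field_simp
  have hm2 : m ^ 2 ≤ |x| := by
    have h1 : m ≤ Real.sqrt |x| := min_le_right _ _
    calc m ^ 2 ≤ Real.sqrt |x| ^ 2 := by nlinarith [Real.sqrt_nonneg |x|]
    _ = |x| := Real.sq_sqrt (abs_nonneg x)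
  -- generic lower bound for sqrt
  have sqrt_lb : ∀ y : ℝ, y ^ 2 ≤ D → y ≤ Real.sqrt D := by
    intro y hy
    have := Real.sqrt_le_sqrt hy
    rw [Real.sqrt_sq_eq_abs] at this
    linarith [le_abs_self y]
  have hP0 : 0 ≤ P := by rw [hPdef]; nlinarith
  have hQ0 : 0 ≤ Q := by rw [hQdef]; nlinarith
  -- μ2 ≥ 0
  have hsDP : Real.sqrt D ≤ P := by
    have h1 : Real.sqrt D ≤ Real.sqrt (P ^ 2) := Real.sqrt_le_sqrt (by linarith)
    rwa [Real.sqrt_sq hP0] at h1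
  have hμ2_0 : 0 ≤ μ2 := by rw [hμ2def]; linarith
  -- μ2 ≤ 1 - θ/2
  have hμ2_ub : μ2 ≤ 1 - θ / 2 := by
    have key : (P - (2 - θ)) ^ 2 ≤ D := by
      rw [hDdef, hPdef, hQdef]; nlinarith [sq_nonneg x, sq_nonneg θ]
    have := sqrt_lb _ key
    rw [hμ2def]; linarith
  have hμ2_1 : μ2 ≤ 1 := by linarith
  have hnn : (0:ℝ) ≤ 1 - μ2 := by linarith
  -- μ1 ≥ 1 + m/2
  have h2P : 2 - P ≤ θ := by rw [hPdef]; nlinarith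
  have hDid : D = (2 - P) ^ 2 + 4 * (-x) := by rw [hDdef, hPdef, hQdef]; ring
  have hμ1_lb : 1 + (1/2) * m ≤ μ1 := by
    have key : (2 - P + m) ^ 2 ≤ D := by
      rw [hDid]
      nlinarith [mul_le_mul_of_nonneg_right h2P hm0, hmθ, hm2, abs_nonneg x, hxabs]
    have := sqrt_lb _ key
    rw [hμ1def]; linarith
  have hρ0 : (0:ℝ) ≤ 1 + (1/2) * m := by linarith
  have hμ1_1 : 1 ≤ μ1 := by linarith
  have hμ1_0 : 0 ≤ μ1 := by linarith
  -- sum and product of eigenvalues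
  have hsum : μ1 + μ2 = P := by rw [hμ1def, hμ2def]; ring
  have hprod : μ1 * μ2 = Q := by
    rw [hμ1def, hμ2def]
    have h2 : (P + Real.sqrt D) / 2 * ((P - Real.sqrt D) / 2)
        = (P ^ 2 - Real.sqrt D ^ 2) / 4 := by ring
    rw [h2, hsD, hDdef]; ring
  have hPQ : P - Q = 1 - x := by rw [hPdef, hQdef]; ring
  clear_value m μ1 μ2 D Q P
  -- matrix entry recurrences
  have hu : ∀ n : ℕ, (A ^ (n+1)) 0 0 = P * (A ^ n) 0 0 + (A ^ n) 0 1 := by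
    intro n
    rw [pow_succ, Matrix.mul_apply, Fin.sum_univ_two, hA]
    simp
    ring
  have hv : ∀ n : ℕ, (A ^ (n+1)) 0 1 = -Q * (A ^ n) 0 0 := by
    intro n
    rw [pow_succ, Matrix.mul_apply, Fin.sum_univ_two, hA]
    simp
    ring
  have e0 : (A ^ 0) 0 0 = 1 := by simp [Matrix.one_apply]
  have e1 : (A ^ 0) 0 1 = 0 := by simp [Matrix.one_apply]
  have hc0 : (A ^ 0) 0 0 + (A ^ 0) 0 1 = 1 := by rw [e0, e1]; norm_num
  have hrec : ∀ n : ℕ, (A ^ (n+2)) 0 0 + (A ^ (n+2)) 0 1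
      = P * ((A ^ (n+1)) 0 0 + (A ^ (n+1)) 0 1) - Q * ((A ^ n) 0 0 + (A ^ n) 0 1) := by
    intro n
    rw [hu (n+1), hv (n+1), hu n, hv n]
    ring
  -- key closed recurrence
  have hc : ∀ n : ℕ, (A ^ (n+1)) 0 0 + (A ^ (n+1)) 0 1
      = μ2 * ((A ^ n) 0 0 + (A ^ n) 0 1) + (1 - μ2) * μ1 ^ (n+1) := by
    intro n
    induction n with
    | zero =>
      rw [hu 0, hv 0, e0, e1, pow_one]
      linear_combination hprod - hsum
    | succ n ih =>
      rw [hrec n, ih]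
      linear_combination ((A ^ n) 0 0 + (A ^ n) 0 1) * hprod
        - (μ2 * ((A ^ n) 0 0 + (A ^ n) 0 1) + (1 - μ2) * μ1 ^ (n+1)) * hsum
  -- invariant
  have inv : ∀ n : ℕ, 0 ≤ (A ^ n) 0 0 + (A ^ n) 0 1 ∧
      (1 - μ2) * μ1 ^ n ≤ (A ^ n) 0 0 + (A ^ n) 0 1 ∧
      (1 - μ2) * ((A ^ n) 0 0 + (A ^ n) 0 1) ≤ (1 - μ2) * μ1 ^ (n+1) := by
    intro n
    induction n with
    | zero =>
      rw [hc0]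
      refine ⟨by norm_num, by rw [pow_zero]; linarith, ?_⟩
      rw [zero_add, pow_one]
      simpa using le_mul_of_one_le_right hnn hμ1_1
    | succ n ih =>
      obtain ⟨h0, h1, h2⟩ := ih
      have hpn : (0:ℝ) ≤ μ1 ^ (n+1) := pow_nonneg hμ1_0 _
      have hps : μ1 ^ (n+1+1) = μ1 ^ (n+1) * μ1 := pow_succ μ1 (n+1)
      have w1 : 0 ≤ μ2 * ((A ^ n) 0 0 + (A ^ n) 0 1) := mul_nonneg hμ2_0 h0
      have w2 : 0 ≤ (1 - μ2) * μ1 ^ (n+1) := mul_nonneg hnn hpn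
      have t1 : μ2 * ((1 - μ2) * ((A ^ n) 0 0 + (A ^ n) 0 1))
          ≤ μ2 * ((1 - μ2) * μ1 ^ (n+1)) := mul_le_mul_of_nonneg_left h2 hμ2_0
      have t2 : (1 - μ2) * μ1 ^ (n+1) ≤ (1 - μ2) * μ1 ^ (n+1) * μ1 :=
        le_mul_of_one_le_right w2 hμ1_1
      rw [hc n]
      refine ⟨by linarith, by linarith, ?_⟩
      rw [hps]
      calc (1 - μ2) * (μ2 * ((A ^ n) 0 0 + (A ^ n) 0 1) + (1 - μ2) * μ1 ^ (n+1))
          = μ2 * ((1 - μ2) * ((A ^ n) 0 0 + (A ^ n) 0 1))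
            + (1 - μ2) * ((1 - μ2) * μ1 ^ (n+1)) := by ring
        _ ≤ μ2 * ((1 - μ2) * μ1 ^ (n+1)) + (1 - μ2) * ((1 - μ2) * μ1 ^ (n+1)) := by
            have h3 := mul_le_mul_of_nonneg_left h2 hμ2_0
            linarith
        _ = (1 - μ2) * μ1 ^ (n+1) := by ring
        _ ≤ (1 - μ2) * μ1 ^ (n+1) * μ1 := t2
        _ = (1 - μ2) * (μ1 ^ (n+1) * μ1) := by ring
  obtain ⟨h0, h1, h2⟩ := inv t
  obtain ⟨h0', _, _⟩ := inv (t+1)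
  constructor
  · rw [abs_of_nonneg h0, abs_of_nonneg h0']
    have := hc t
    linarith
  · rw [abs_of_nonneg h0]
    have hpow : (1 + (1/2) * m) ^ t ≤ μ1 ^ t := pow_le_pow_left₀ hρ0 hμ1_lb t
    have hρt : (0:ℝ) ≤ (1 + (1/2) * m) ^ t := pow_nonneg hρ0 t
    have s1 : (θ/2) * (1 + (1/2) * m) ^ t ≤ (1 - μ2) * (1 + (1/2) * m) ^ t :=
      mul_le_mul_of_nonneg_right (by linarith) hρt
    have s2 : (1 - μ2) * (1 + (1/2) * m) ^ t ≤ (1 - μ2) * μ1 ^ t :=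
      mul_le_mul_of_nonneg_left hpow hnn
    linarith
end

section
/- Let θ ∈ (0, 1/4], x ∈ [-1/4, 0], and let A = [[(2-θ)(1-x), -(1-θ)(1-x)], [1, 0]] with eigenvalues μ₁ ≥ μ₂. Write (a_t, -b_t) for the first row of A^t. Then for any natural numbers τ ≤ t, |a_{t-τ}|·|a_τ - b_τ| ≤ (2/θ + (t+1))·|a_{t+1} - b_{t+1}|. -/
open Matrix

noncomputable def hseq (μ ν : ℝ) (s : ℕ) : ℝ := ∑ i ∈ Finset.range (s+1), μ^i * ν^(s-i)

lemma hseq_zero (μ ν : ℝ) : hseq μ ν 0 = 1 := by simp [hseq]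

lemma mul_hseq (μ ν : ℝ) (s : ℕ) : μ * hseq μ ν s = hseq μ ν (s+1) - ν^(s+1) := by
  have h1 : hseq μ ν (s+1) = ∑ i ∈ Finset.range (s+1), μ^(i+1) * ν^(s-i) + ν^(s+1) := by
    rw [hseq, Finset.sum_range_succ']
    simp [Nat.add_sub_add_right]
  have e : ∑ i ∈ Finset.range (s+1), μ * (μ^i * ν^(s-i))
      = ∑ i ∈ Finset.range (s+1), μ^(i+1) * ν^(s-i) :=
    Finset.sum_congr rfl (fun i _ => by ring)
  rw [hseq, Finset.mul_sum, e, h1]; ring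

lemma mul_hseq' (μ ν : ℝ) (s : ℕ) : ν * hseq μ ν s = hseq μ ν (s+1) - μ^(s+1) := by
  have h1 : hseq μ ν (s+1) = ∑ i ∈ Finset.range (s+1), μ^i * ν^(s-i+1) + μ^(s+1) := by
    rw [hseq, Finset.sum_range_succ]
    congr 1
    · refine Finset.sum_congr rfl (fun i hi => ?_)
      have hi' : i ≤ s := Nat.lt_succ_iff.mp (Finset.mem_range.mp hi)
      rw [Nat.succ_sub hi']
    · simp
  have e : ∑ i ∈ Finset.range (s+1), ν * (μ^i * ν^(s-i))
      = ∑ i ∈ Finset.range (s+1), μ^i * ν^(s-i+1) :=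
    Finset.sum_congr rfl (fun i _ => by ring)
  rw [hseq, Finset.mul_sum, e, h1]; ring

lemma hseq_rec (μ ν : ℝ) (s : ℕ) :
    hseq μ ν (s+1+1) = (μ+ν) * hseq μ ν (s+1) - (μ*ν) * hseq μ ν s := by
  have h2 := mul_hseq' μ ν (s+1)
  have h3 := mul_hseq' μ ν s
  linear_combination μ * h3 - h2

lemma hseq_nonneg (μ ν : ℝ) (hμ : 0 ≤ μ) (hν : 0 ≤ ν) (s : ℕ) : 0 ≤ hseq μ ν s :=
  Finset.sum_nonneg (fun i _ => mul_nonneg (pow_nonneg hμ i) (pow_nonneg hν _))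

lemma hseq_pow_le (μ ν : ℝ) (hμ : 0 ≤ μ) (hν : 0 ≤ ν) (a b : ℕ) :
    μ^b * hseq μ ν a ≤ hseq μ ν (a+b) := by
  induction b with
  | zero => simp
  | succ n ih =>
    have h2 : μ * (μ^n * hseq μ ν a) ≤ μ * hseq μ ν (a+n) :=
      mul_le_mul_of_nonneg_left ih hμ
    have h3 := mul_hseq μ ν (a+n)
    have h4 : (0:ℝ) ≤ ν^(a+n+1) := pow_nonneg hν _
    have h5 : μ^(n+1) * hseq μ ν a = μ * (μ^n * hseq μ ν a) := by ring
    have h6 : a + (n+1) = a + n + 1 := rfl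
    rw [h6, h5]
    linarith


lemma comb_nonneg (μ ν : ℝ) (hμ0 : 0 ≤ μ) (hν0 : 0 ≤ ν) (hν1 : ν ≤ 1) (n : ℕ) :
    0 ≤ hseq μ ν (n+1) - (μ*ν) * hseq μ ν n := by
  have h1 := mul_hseq μ ν n
  have hh := hseq_nonneg μ ν hμ0 hν0 n
  have hν' : (0:ℝ) ≤ ν^(n+1) := pow_nonneg hν0 _
  have hint2 : (0:ℝ) ≤ (1 - ν) * (μ * hseq μ ν n) :=
    mul_nonneg (by linarith) (mul_nonneg hμ0 hh)
  nlinarith [hint2, h1]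

lemma comb_le (μ ν : ℝ) (hμ1 : 1 ≤ μ) (hν0 : 0 ≤ ν) (n : ℕ) :
    hseq μ ν (n+1) - (μ*ν) * hseq μ ν n ≤ μ^(n+1) := by
  have h2 := mul_hseq' μ ν n
  have hh := hseq_nonneg μ ν (by linarith) hν0 n
  have hint1 : (0:ℝ) ≤ (μ - 1) * (ν * hseq μ ν n) :=
    mul_nonneg (by linarith) (mul_nonneg hν0 hh)
  nlinarith [hint1, h2]

lemma comb_ge (μ ν c : ℝ) (hμ0 : 0 ≤ μ) (hν0 : 0 ≤ ν) (hc : 0 ≤ c) (hc2 : c ≤ μ * (1 - ν))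
    (n : ℕ) : c * hseq μ ν n ≤ hseq μ ν (n+1) - (μ*ν) * hseq μ ν n := by
  have h1 := mul_hseq μ ν n
  have hh := hseq_nonneg μ ν hμ0 hν0 n
  have hν' : (0:ℝ) ≤ ν^(n+1) := pow_nonneg hν0 _
  have hint3 : (0:ℝ) ≤ (μ * (1 - ν) - c) * hseq μ ν n := mul_nonneg (by linarith) hh
  nlinarith [hint3, h1]

theorem agd_eigen_combo_inequality (θ x : ℝ) (hθ : 0 < θ) (hθ' : θ ≤ 1/4)
    (hx : -(1/4) ≤ x) (hx' : x ≤ 0)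
    (A : Matrix (Fin 2) (Fin 2) ℝ)
    (hA : A = !![(2 - θ) * (1 - x), -((1 - θ) * (1 - x)); 1, 0])
    (τ t : ℕ) (hτ : τ ≤ t) :
    |(A ^ (t - τ)) 0 0| * |(A ^ τ) 0 0 + (A ^ τ) 0 1| ≤
      (2 / θ + ((t : ℝ) + 1)) * |(A ^ (t + 1)) 0 0 + (A ^ (t + 1)) 0 1| := by
  obtain ⟨p, hp_def⟩ : ∃ p : ℝ, p = (2 - θ) * (1 - x) := ⟨_, rfl⟩
  obtain ⟨q, hq_def⟩ : ∃ q : ℝ, q = (1 - θ) * (1 - x) := ⟨_, rfl⟩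
  obtain ⟨d, hd_def⟩ : ∃ d : ℝ, d = p^2 - 4*q := ⟨_, rfl⟩
  have hu : (1:ℝ) ≤ 1 - x := by linarith
  have hd : 0 ≤ d := by
    have h1 : d = (1-x) * ((2-θ)^2*(1-x) - 4*(1-θ)) := by rw [hd_def, hp_def, hq_def]; ring
    have h2 : (0:ℝ) ≤ (2-θ)^2*(1-x) - 4*(1-θ) := by
      nlinarith [mul_nonneg (sq_nonneg (2-θ)) (neg_nonneg.mpr hx')]
    rw [h1]
    exact mul_nonneg (by linarith) h2
  obtain ⟨sd, hsd_def⟩ : ∃ sd : ℝ, sd = Real.sqrt d := ⟨_, rfl⟩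
  have hsd0 : 0 ≤ sd := hsd_def ▸ Real.sqrt_nonneg d
  have hsd2 : sd^2 = d := hsd_def ▸ Real.sq_sqrt hd
  obtain ⟨μ, hμ_def⟩ : ∃ μ : ℝ, μ = (p + sd)/2 := ⟨_, rfl⟩
  obtain ⟨ν, hν_def⟩ : ∃ ν : ℝ, ν = (p - sd)/2 := ⟨_, rfl⟩
  have hp0 : 0 ≤ p := by rw [hp_def]; nlinarith
  have hq0 : 0 ≤ q := by rw [hq_def]; nlinarith
  have hpsum : μ + ν = p := by rw [hμ_def, hν_def]; ring
  have hqprod : μ * ν = q := by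
    have h1 : μ * ν = (p^2 - sd^2)/4 := by rw [hμ_def, hν_def]; ring
    rw [h1, hsd2, hd_def]; ring
  have hν0 : 0 ≤ ν := by
    have h1 : sd ≤ p := by
      rw [hsd_def]
      calc Real.sqrt d ≤ Real.sqrt (p^2) := Real.sqrt_le_sqrt (by rw [hd_def]; linarith)
        _ = p := Real.sqrt_sq hp0
    rw [hν_def]; linarith
  have hμ1 : 1 ≤ μ := by
    have h2 : (2-p)^2 ≤ d := by
      have : d - (2-p)^2 = -4*x := by rw [hd_def, hp_def, hq_def]; ring
      linarith
    have h1 : 2 - p ≤ sd :=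
      calc 2 - p ≤ |2 - p| := le_abs_self _
        _ = Real.sqrt ((2-p)^2) := (Real.sqrt_sq_eq_abs _).symm
        _ ≤ Real.sqrt d := Real.sqrt_le_sqrt h2
        _ = sd := hsd_def.symm
    rw [hμ_def]; linarith
  have hν1 : ν ≤ 1 - θ/2 := by
    have h2 : (p - (2-θ))^2 ≤ d := by
      have he : d - (p - (2-θ))^2 = (-x)*(2-θ)^2 + (1-x)*θ^2 := by
        rw [hd_def, hp_def, hq_def]; ring
      nlinarith [mul_nonneg (neg_nonneg.mpr hx') (sq_nonneg (2-θ)),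
        mul_nonneg (by linarith : (0:ℝ) ≤ 1-x) (sq_nonneg θ)]
    have h1 : p - (2-θ) ≤ sd :=
      calc p - (2-θ) ≤ |p - (2-θ)| := le_abs_self _
        _ = Real.sqrt ((p - (2-θ))^2) := (Real.sqrt_sq_eq_abs _).symm
        _ ≤ Real.sqrt d := Real.sqrt_le_sqrt h2
        _ = sd := hsd_def.symm
    rw [hν_def]; linarith
  have hμ0 : 0 ≤ μ := by linarith
  -- matrix entries
  have hA00 : A 0 0 = p := by rw [hA, hp_def]; rfl
  have hA01 : A 0 1 = -q := by rw [hA, hq_def]; rfl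
  have hA10 : A 1 0 = 1 := by rw [hA]; rfl
  have hA11 : A 1 1 = 0 := by rw [hA]; rfl
  have key : ∀ n : ℕ, (A ^ (n+1)) 0 0 = hseq μ ν (n+1) ∧
      (A ^ (n+1)) 0 1 = -(μ*ν) * hseq μ ν n := by
    intro n
    induction n with
    | zero =>
      constructor
      · rw [pow_one, hA00]
        have h1 : hseq μ ν 1 = ν + μ := by
          simp [hseq, Finset.sum_range_succ]
        rw [h1]; linarith [hpsum]
      · rw [pow_one, hA01, hseq_zero, hqprod]; ring
    | succ n ih =>
      have hmul : A ^ (n+1+1) = A ^ (n+1) * A := pow_succ A (n+1)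
      have e00 : (A ^ (n+1+1)) 0 0 = (A^(n+1)) 0 0 * A 0 0 + (A^(n+1)) 0 1 * A 1 0 := by
        rw [hmul, Matrix.mul_apply, Fin.sum_univ_two]
      have e01 : (A ^ (n+1+1)) 0 1 = (A^(n+1)) 0 0 * A 0 1 + (A^(n+1)) 0 1 * A 1 1 := by
        rw [hmul, Matrix.mul_apply, Fin.sum_univ_two]
      constructor
      · rw [e00, ih.1, ih.2, hA00, hA10, hseq_rec, ← hpsum]; ring
      · rw [e01, ih.1, ih.2, hA01, hA11, ← hqprod]; ring
  have H00 : ∀ n : ℕ, (A ^ n) 0 0 = hseq μ ν n := by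
    intro n
    cases n with
    | zero => rw [pow_zero, hseq_zero]; rfl
    | succ n => exact (key n).1
  -- combined quantity bounds
  have hcomb : ∀ n : ℕ, 0 ≤ (A ^ n) 0 0 + (A ^ n) 0 1 ∧
      (A ^ n) 0 0 + (A ^ n) 0 1 ≤ μ ^ n := by
    intro n
    cases n with
    | zero =>
      have e0 : (A ^ 0) 0 0 + (A ^ 0) 0 1 = 1 := by rw [pow_zero]; norm_num [Matrix.one_apply]
      rw [e0, pow_zero]
      norm_num
    | succ n =>
      rw [(key n).1, (key n).2]
      have c1 := comb_nonneg μ ν hμ0 hν0 (by linarith) n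
      have c2 := comb_le μ ν hμ1 hν0 n
      constructor
      · linarith
      · linarith
  have hct1 : (θ/2) * hseq μ ν t ≤ (A ^ (t+1)) 0 0 + (A ^ (t+1)) 0 1 := by
    rw [(key t).1, (key t).2]
    have hfac : θ/2 ≤ μ * (1 - ν) := by
      nlinarith [mul_nonneg (by linarith : (0:ℝ) ≤ μ - 1) (by linarith : (0:ℝ) ≤ 1 - ν)]
    have c3 := comb_ge μ ν (θ/2) hμ0 hν0 (by linarith) hfac t
    linarith
  have hht : 0 ≤ hseq μ ν t := hseq_nonneg μ ν hμ0 hν0 t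
  have hstep : hseq μ ν (t-τ) * μ^τ ≤ hseq μ ν t := by
    have h1 := hseq_pow_le μ ν hμ0 hν0 (t-τ) τ
    rwa [Nat.sub_add_cancel hτ, mul_comm] at h1
  -- assemble
  have hXnn : 0 ≤ (A ^ (t-τ)) 0 0 := by rw [H00]; exact hseq_nonneg μ ν hμ0 hν0 _
  have hZnn : 0 ≤ (A ^ (t+1)) 0 0 + (A ^ (t+1)) 0 1 := (hcomb (t+1)).1
  rw [abs_of_nonneg hXnn, abs_of_nonneg (hcomb τ).1, abs_of_nonneg hZnn]
  have hLHS : (A ^ (t-τ)) 0 0 * ((A ^ τ) 0 0 + (A ^ τ) 0 1) ≤ hseq μ ν t := by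
    calc (A ^ (t-τ)) 0 0 * ((A ^ τ) 0 0 + (A ^ τ) 0 1)
        ≤ (A ^ (t-τ)) 0 0 * μ^τ := mul_le_mul_of_nonneg_left (hcomb τ).2 hXnn
      _ = hseq μ ν (t-τ) * μ^τ := by rw [H00]
      _ ≤ hseq μ ν t := hstep
  have hK : (0:ℝ) < 2/θ := by positivity
  have ht0 : (0:ℝ) ≤ (t:ℝ) := Nat.cast_nonneg t
  have hK2 : 2/θ ≤ 2/θ + ((t:ℝ)+1) := by linarith
  have hRHS : hseq μ ν t ≤ (2/θ + ((t:ℝ)+1)) * ((A ^ (t+1)) 0 0 + (A ^ (t+1)) 0 1) := by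
    calc hseq μ ν t = (2/θ) * ((θ/2) * hseq μ ν t) := by field_simp
      _ ≤ (2/θ) * ((A ^ (t+1)) 0 0 + (A ^ (t+1)) 0 1) :=
          mul_le_mul_of_nonneg_left hct1 (le_of_lt hK)
      _ ≤ (2/θ + ((t:ℝ)+1)) * ((A ^ (t+1)) 0 0 + (A ^ (t+1)) 0 1) :=
          mul_le_mul_of_nonneg_right hK2 hZnn
  linarith
end

section
/- Let θ ∈ (0, 1/4]. For x ∈ [-1, 1], let A(x) = [[(2-θ)(1-x), -(1-θ)(1-x)], [1, 0]], and for a fixed natural number t define g(x) = |(A(x)^t)_{1,1}|, the absolute value of the (1,1) entry of the t-th power. Then g is monotonically decreasing on [-1, θ²/(2-θ)²], and for every x ∈ [θ²/(2-θ)², 1] we have g(x) ≤ g(θ²/(2-θ)²). -/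
/-!
Write `A(x) = !![2c, -(c² - q); 1, 0]` with `c = (2 - θ)(1 - x)/2` and
`q = (1 - x)(θ² - (2 - θ)² x)/4`, so that its eigenvalues are `c ± √q`. In the quadratic algebra
`ℝ[√q]` (`QuadraticAlgebra ℝ q 0`), the `(1,1)` entry of `A(x)^t` is the `im` part of
`(c + √q)^(t+1)`.

For `x ≤ θ²/(2 - θ)²` we have `c, q ≥ 0`, both decreasing in `x`, and the `re` and `im` parts of
`(c + √q)^n` are polynomials in `c, q` with nonnegative coefficients, hence decreasing in `x`.

For `x ≥ θ²/(2 - θ)²` we have `q ≤ 0`, so the multiplicative norm `c² - q = (1 - θ)(1 - x) = ρ²`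
bounds the `re` part of `(c + √q)^n` by `ρⁿ`, and by induction the `im` part of `(c + √q)^(n+1)`
by `(n + 1) ρⁿ`. This bound increases with `ρ`, and at `x = θ²/(2 - θ)²`, where `q = 0`, it is
attained.
-/

open Matrix

lemma pow_add_two_eq_of_sq_eq {R A : Type*} [CommSemiring R] [Ring A] [Algebra R A]
    {x : A} {s p : R} (hx : x ^ 2 = s • x - p • 1) (n : ℕ) :
    x ^ (n + 2) = s • x ^ (n + 1) - p • x ^ n := by
  rw [pow_add, hx, mul_sub, mul_smul_comm, mul_smul_comm, mul_one, pow_succ]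

namespace QuadraticAlgebra

section CommRing

variable {R : Type*} [CommRing R]

lemma re_mul_mk_one {q : R} (z : QuadraticAlgebra R q 0) (c : R) :
    (z * ⟨c, 1⟩).re = c * z.re + q * z.im := by
  rw [re_mul]; ring

lemma im_mul_mk_one {q : R} (z : QuadraticAlgebra R q 0) (c : R) :
    (z * ⟨c, 1⟩).im = z.re + c * z.im := by
  rw [im_mul]; ring

lemma mk_one_sq (c q : R) :
    (⟨c, 1⟩ : QuadraticAlgebra R q 0) ^ 2 = (2 * c) • ⟨c, 1⟩ - (c ^ 2 - q) • 1 := by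
  ext <;>
    simp only [sq, mk_mul_mk, smul_eq_mul, re_sub, im_sub, re_smul, im_smul, re_one, im_one] <;>
    ring

lemma im_pow_succ_mk_one_zero_zero (c : R) (n : ℕ) :
    ((⟨c, 1⟩ : QuadraticAlgebra R 0 0) ^ (n + 1)).im = (n + 1) * c ^ n := by
  have hre : ∀ n : ℕ, ((⟨c, 1⟩ : QuadraticAlgebra R 0 0) ^ n).re = c ^ n := by
    intro n
    induction n with
    | zero => simp [re_one]
    | succ n ih => rw [pow_succ, re_mul_mk_one, ih]; ring
  induction n with
  | zero => simp
  | succ n ih => rw [pow_succ, im_mul_mk_one, ih, hre]; push_cast; ring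

end CommRing

section Ordered

variable {R : Type*} [CommRing R] [PartialOrder R] [IsOrderedRing R]

lemma pow_mk_one_nonneg {c q : R} (hc : 0 ≤ c) (hq : 0 ≤ q) (n : ℕ) :
    0 ≤ ((⟨c, 1⟩ : QuadraticAlgebra R q 0) ^ n).re ∧
      0 ≤ ((⟨c, 1⟩ : QuadraticAlgebra R q 0) ^ n).im := by
  induction n with
  | zero => simp [re_one, im_one]
  | succ n ih =>
    obtain ⟨hre, him⟩ := ih
    rw [pow_succ, re_mul_mk_one, im_mul_mk_one]
    constructor <;> positivity

lemma pow_mk_one_mono {c₁ c₂ q₁ q₂ : R} (hc₁ : 0 ≤ c₁) (hq₁ : 0 ≤ q₁) (hc : c₁ ≤ c₂)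
    (hq : q₁ ≤ q₂) (n : ℕ) :
    ((⟨c₁, 1⟩ : QuadraticAlgebra R q₁ 0) ^ n).re ≤ ((⟨c₂, 1⟩ : QuadraticAlgebra R q₂ 0) ^ n).re ∧
      ((⟨c₁, 1⟩ : QuadraticAlgebra R q₁ 0) ^ n).im ≤
        ((⟨c₂, 1⟩ : QuadraticAlgebra R q₂ 0) ^ n).im := by
  induction n with
  | zero => exact ⟨le_rfl, le_rfl⟩
  | succ n ih =>
    obtain ⟨hre, him⟩ := pow_mk_one_nonneg hc₁ hq₁ n
    rw [pow_succ, pow_succ, re_mul_mk_one, im_mul_mk_one, re_mul_mk_one, im_mul_mk_one]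
    exact ⟨add_le_add (mul_le_mul hc ih.1 hre (hc₁.trans hc))
        (mul_le_mul hq ih.2 him (hq₁.trans hq)),
      add_le_add ih.1 (mul_le_mul hc ih.2 him (hc₁.trans hc))⟩

end Ordered

section LinearOrdered

variable {R : Type*} [CommRing R] [LinearOrder R] [IsStrictOrderedRing R]

lemma abs_re_pow_le {q ρ : R} (hq : q ≤ 0) (hρ : 0 ≤ ρ) {z : QuadraticAlgebra R q 0}
    (hz : z.norm = ρ ^ 2) (n : ℕ) : |(z ^ n).re| ≤ ρ ^ n := by
  refine abs_le_of_sq_le_sq ?_ (pow_nonneg hρ n)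
  have : (z ^ n).norm = (ρ ^ n) ^ 2 := by rw [map_pow, hz, ← pow_mul, ← pow_mul, mul_comm]
  rw [norm_def] at this
  nlinarith [mul_nonneg (neg_nonneg.mpr hq) (mul_self_nonneg (z ^ n).im)]

lemma abs_im_pow_succ_mk_one_le {c q ρ : R} (hq : q ≤ 0) (hρ : 0 ≤ ρ) (hcρ : c ^ 2 - q = ρ ^ 2)
    (n : ℕ) : |((⟨c, 1⟩ : QuadraticAlgebra R q 0) ^ (n + 1)).im| ≤ (n + 1) * ρ ^ n := by
  set z : QuadraticAlgebra R q 0 := ⟨c, 1⟩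
  have hz : z.norm = ρ ^ 2 := by rw [← hcρ, norm_def]; ring
  have hc : |c| ≤ ρ := abs_le_of_sq_le_sq (by linarith) hρ
  induction n with
  | zero => simp [z]
  | succ n ih =>
    calc |(z ^ (n + 1 + 1)).im| = |(z ^ (n + 1)).re + c * (z ^ (n + 1)).im| := by
          rw [pow_succ _ (n + 1), im_mul_mk_one]
      _ ≤ |(z ^ (n + 1)).re| + |c| * |(z ^ (n + 1)).im| := by
          rw [← abs_mul]; exact abs_add_le _ _
      _ ≤ ρ ^ (n + 1) + ρ * ((n + 1) * ρ ^ n) := by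
          gcongr
          exact abs_re_pow_le hq hρ hz _
      _ = (↑(n + 1) + 1) * ρ ^ (n + 1) := by push_cast; ring

end LinearOrdered

end QuadraticAlgebra

lemma Matrix.companion_two_sq {R : Type*} [CommRing R] (s p : R) :
    (!![s, -p; 1, 0] : Matrix (Fin 2) (Fin 2) R) ^ 2 = s • !![s, -p; 1, 0] - p • 1 := by
  ext i j
  fin_cases i <;> fin_cases j <;> simp [sq, sub_eq_add_neg]

/-- Both sides satisfy the recurrence `e (n + 2) = s e (n + 1) - p e n`, since `!![s, -p; 1, 0]`
and `c + √q` are roots of `X² - sX + p`. -/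
lemma Matrix.companion_two_pow_apply_zero_zero {R : Type*} [CommRing R] {s p c q : R}
    (hs : 2 * c = s) (hp : c ^ 2 - q = p) (n : ℕ) :
    ((!![s, -p; 1, 0] : Matrix (Fin 2) (Fin 2) R) ^ n) 0 0 =
      ((⟨c, 1⟩ : QuadraticAlgebra R q 0) ^ (n + 1)).im := by
  have hz := QuadraticAlgebra.mk_one_sq c q
  rw [hs, hp] at hz
  induction n using Nat.twoStepInduction with
  | zero => simp
  | one => simp [sq, ← hs, two_mul]
  | more n ih₀ ih₁ =>
    rw [pow_add_two_eq_of_sq_eq (companion_two_sq s p), pow_add_two_eq_of_sq_eq hz]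
    simp [ih₀, ih₁]

def agdMatrix (θ x : ℝ) : Matrix (Fin 2) (Fin 2) ℝ :=
  !![(2 - θ) * (1 - x), -((1 - θ) * (1 - x)); 1, 0]

lemma agdMatrix_pow_apply_zero_zero (θ x : ℝ) (t : ℕ) :
    (agdMatrix θ x ^ t) 0 0 = ((⟨(2 - θ) * (1 - x) / 2, 1⟩ :
      QuadraticAlgebra ℝ ((1 - x) * (θ ^ 2 - (2 - θ) ^ 2 * x) / 4) 0) ^ (t + 1)).im :=
  companion_two_pow_apply_zero_zero (by ring) (by ring) t

lemma abs_agdMatrix_pow_apply_zero_zero_le_of_le {θ a b : ℝ} (hθ : θ ≤ 1) (hab : a ≤ b)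
    (hb : (2 - θ) ^ 2 * b ≤ θ ^ 2) (t : ℕ) :
    |(agdMatrix θ b ^ t) 0 0| ≤ |(agdMatrix θ a ^ t) 0 0| := by
  have hb1 : b ≤ 1 := by nlinarith [show 1 ≤ (2 - θ) ^ 2 by nlinarith]
  have hc : 0 ≤ (2 - θ) * (1 - b) / 2 := by nlinarith
  have hq : 0 ≤ (1 - b) * (θ ^ 2 - (2 - θ) ^ 2 * b) / 4 := by nlinarith
  have hnonneg := (QuadraticAlgebra.pow_mk_one_nonneg hc hq (t + 1)).2
  have hmono := (QuadraticAlgebra.pow_mk_one_mono hc hq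
    (c₂ := (2 - θ) * (1 - a) / 2) (q₂ := (1 - a) * (θ ^ 2 - (2 - θ) ^ 2 * a) / 4)
    (by nlinarith) (by gcongr; linarith) (t + 1)).2
  rw [agdMatrix_pow_apply_zero_zero, agdMatrix_pow_apply_zero_zero, abs_of_nonneg hnonneg,
    abs_of_nonneg (hnonneg.trans hmono)]
  exact hmono

lemma abs_agdMatrix_pow_apply_zero_zero_le {θ x : ℝ} (hθ : θ ≤ 1) (hx : θ ^ 2 ≤ (2 - θ) ^ 2 * x)
    (hx1 : x ≤ 1) (t : ℕ) :
    |(agdMatrix θ x ^ t) 0 0| ≤ (t + 1) * √((1 - θ) * (1 - x)) ^ t := by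
  rw [agdMatrix_pow_apply_zero_zero]
  exact QuadraticAlgebra.abs_im_pow_succ_mk_one_le (by nlinarith) (Real.sqrt_nonneg _)
    (by rw [Real.sq_sqrt (by nlinarith)]; ring) t

lemma abs_agdMatrix_pow_apply_zero_zero_of_eq {θ X : ℝ} (hθ : θ ≤ 1)
    (hX : (2 - θ) ^ 2 * X = θ ^ 2) (t : ℕ) :
    |(agdMatrix θ X ^ t) 0 0| = (t + 1) * √((1 - θ) * (1 - X)) ^ t := by
  have hc : 0 ≤ (2 - θ) * (1 - X) / 2 := by nlinarith
  have hcp : ((2 - θ) * (1 - X) / 2) ^ 2 - 0 = (1 - θ) * (1 - X) := by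
    linear_combination (-(1 - X) / 4) * hX
  rw [agdMatrix, companion_two_pow_apply_zero_zero (by ring) hcp,
    QuadraticAlgebra.im_pow_succ_mk_one_zero_zero, ← hcp, sub_zero, Real.sqrt_sq hc,
    abs_of_nonneg (by positivity)]

theorem agd_entry_monotone_in_x_general (θ : ℝ) (hθ' : θ ≤ 1/4) (t : ℕ) :
    AntitoneOn
      (fun x : ℝ =>
        |(((!![(2 - θ) * (1 - x), -((1 - θ) * (1 - x)); 1, 0] : Matrix (Fin 2) (Fin 2) ℝ)) ^ t) 0 0|)
      (Set.Icc (-1) (θ ^ 2 / (2 - θ) ^ 2)) ∧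
    ∀ x ∈ Set.Icc (θ ^ 2 / (2 - θ) ^ 2) (1 : ℝ),
      |(((!![(2 - θ) * (1 - x), -((1 - θ) * (1 - x)); 1, 0] : Matrix (Fin 2) (Fin 2) ℝ)) ^ t) 0 0| ≤
      |(((!![(2 - θ) * (1 - θ ^ 2 / (2 - θ) ^ 2),
            -((1 - θ) * (1 - θ ^ 2 / (2 - θ) ^ 2)); 1, 0] : Matrix (Fin 2) (Fin 2) ℝ)) ^ t) 0 0| := by
  have hθ : θ ≤ 1 := by linarith
  have h2θ : 0 < (2 - θ) ^ 2 := by nlinarith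
  refine ⟨fun a _ b hb hab => ?_, fun x hx => ?_⟩
  · have hb' : (2 - θ) ^ 2 * b ≤ θ ^ 2 := by rw [mul_comm, ← le_div_iff₀ h2θ]; exact hb.2
    exact abs_agdMatrix_pow_apply_zero_zero_le_of_le hθ hab hb' t
  · have hx' : θ ^ 2 ≤ (2 - θ) ^ 2 * x := by rw [mul_comm, ← div_le_iff₀ h2θ]; exact hx.1
    calc _ ≤ (t + 1) * √((1 - θ) * (1 - x)) ^ t :=
          abs_agdMatrix_pow_apply_zero_zero_le hθ hx' hx.2 t
      _ ≤ (t + 1) * √((1 - θ) * (1 - θ ^ 2 / (2 - θ) ^ 2)) ^ t := by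
          gcongr
          exact hx.1
      _ = _ := (abs_agdMatrix_pow_apply_zero_zero_of_eq hθ (mul_div_cancel₀ _ h2θ.ne') t).symm

theorem agd_entry_monotone_in_x (θ : ℝ) (hθ : 0 < θ) (hθ' : θ ≤ 1/4) (t : ℕ) (ht : 0 < t) :
    AntitoneOn
      (fun x : ℝ =>
        |(((!![(2 - θ) * (1 - x), -((1 - θ) * (1 - x)); 1, 0] : Matrix (Fin 2) (Fin 2) ℝ)) ^ t) 0 0|)
      (Set.Icc (-1) (θ ^ 2 / (2 - θ) ^ 2)) ∧
    ∀ x ∈ Set.Icc (θ ^ 2 / (2 - θ) ^ 2) (1 : ℝ),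
      |(((!![(2 - θ) * (1 - x), -((1 - θ) * (1 - x)); 1, 0] : Matrix (Fin 2) (Fin 2) ℝ)) ^ t) 0 0| ≤
      |(((!![(2 - θ) * (1 - θ ^ 2 / (2 - θ) ^ 2),
            -((1 - θ) * (1 - θ ^ 2 / (2 - θ) ^ 2)); 1, 0] : Matrix (Fin 2) (Fin 2) ℝ)) ^ t) 0 0| :=
  agd_entry_monotone_in_x_general θ hθ' t
end

section
/- Consider one-dimensional AGD applied to f(x) = -(γ/2)x², with parameters η > 0 and θ ∈ (0, 1/4], updates y_t = x_t + (1-θ)v_t, x_{t+1} = y_t - η f'(y_t), v_{t+1} = x_{t+1} - x_t, and define the Hamiltonian E_t = f(x_t) + (1/(2η))v_t². Starting from x_0 = -1, v_0 = 1/(1-θ), if γ ≥ 4θ/η then E_1 ≥ E_0; i.e., one AGD step increases the Hamiltonian. -/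
/-!
With `v₀ = -x₀ / (1 - θ)` the momentum exactly cancels the position, so the extrapolated point
`y₀` is the critical point `0` and the step lands at `x₁ = 0` with `v₁ = 1`. The step thus trades
the potential `-γ/2` for kinetic energy, and it gains energy as soon as
`1 / (1 - θ)² - 1 ≤ 4θ ≤ ηγ`, the first inequality being elementary for `0 ≤ θ ≤ 1/4`.
-/

lemma one_div_one_sub_sq_le_one_add_four_mul {θ : ℝ} (hθ : 0 ≤ θ) (hθ' : θ ≤ 1 / 4) :
    (1 / (1 - θ)) ^ 2 ≤ 1 + 4 * θ := by
  have hpos : 0 < (1 - θ) ^ 2 := by nlinarith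
  rw [div_pow, one_pow, div_le_iff₀ hpos]
  -- `(1 + 4θ)(1 - θ)² - 1 = θ (2 - 7θ + 4θ²)`
  nlinarith [mul_nonneg hθ (mul_nonneg (sub_nonneg.2 hθ') (sub_nonneg.2 hθ'))]

lemma extrapolation_eq_zero {x v θ : ℝ} (hθ : θ ≠ 1) (hv : v = -x / (1 - θ)) :
    x + (1 - θ) * v = 0 := by
  rw [hv, mul_div_cancel₀ _ (sub_ne_zero.2 (Ne.symm hθ))]
  ring

theorem agd_can_increase_hamiltonian (γ η θ : ℝ)
    (hη : 0 < η) (hθ : 0 < θ) (hθ' : θ ≤ 1/4) (hγ : 4 * θ / η ≤ γ)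
    (x₀ v₀ y₀ x₁ v₁ : ℝ)
    (hx₀ : x₀ = -1) (hv₀ : v₀ = 1 / (1 - θ))
    (hy₀ : y₀ = x₀ + (1 - θ) * v₀)
    (hx₁ : x₁ = y₀ - η * (-(γ * y₀)))
    (hv₁ : v₁ = x₁ - x₀) :
    -(γ / 2) * x₀ ^ 2 + v₀ ^ 2 / (2 * η) ≤ -(γ / 2) * x₁ ^ 2 + v₁ ^ 2 / (2 * η) := by
  have hy : y₀ = 0 := hy₀ ▸ extrapolation_eq_zero (by linarith) (by rw [hv₀, hx₀]; ring)
  subst hx₀ hv₁ hx₁ hv₀ hy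
  have hkinetic : (1 / (1 - θ)) ^ 2 ≤ 1 + η * γ := by
    linarith [one_div_one_sub_sq_le_one_add_four_mul hθ.le hθ', (div_le_iff₀' hη).1 hγ]
  have hscaled := div_le_div_of_nonneg_right hkinetic (by positivity : 0 ≤ 2 * η)
  have hhalf : η * γ / (2 * η) = γ / 2 := by field_simp
  rw [add_div, hhalf] at hscaled
  simp only [mul_zero, neg_zero, sub_zero, sub_neg_eq_add, zero_add, one_pow, neg_one_sq, mul_one,
    zero_pow two_ne_zero]
  linarith
end

section
/- Let θ ∈ (0, 1/4] and x ∈ [-1/4, θ²/(2-θ)²], let A = [[(2-θ)(1-x), -(1-θ)(1-x)], [1, 0]], and write (a_τ, -b_τ) for the first row of A^τ. Then for any integer t ≥ 2/θ + 1, we have ∑_{τ=0}^{t-1} a_τ ≥ c/θ² for some universal constant c > 0. -/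
open Matrix

noncomputable def sAux (μ₁ μ₂ : ℝ) (τ : ℕ) : ℝ :=
  ∑ i ∈ Finset.range (τ+1), μ₁^i * μ₂^(τ-i)

lemma sAux_zero (μ₁ μ₂ : ℝ) : sAux μ₁ μ₂ 0 = 1 := by simp [sAux]

lemma sAux_succ (μ₁ μ₂ : ℝ) (τ : ℕ) :
    sAux μ₁ μ₂ (τ+1) = μ₂^(τ+1) + μ₁ * sAux μ₁ μ₂ τ := by
  unfold sAux
  rw [Finset.sum_range_succ']
  simp only [Nat.succ_sub_succ, pow_zero, Nat.sub_zero, one_mul, pow_succ]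
  rw [Finset.mul_sum, add_comm]
  congr 1
  exact Finset.sum_congr rfl fun i _ => by ring

lemma sAux_rec (μ₁ μ₂ : ℝ) (τ : ℕ) :
    sAux μ₁ μ₂ (τ+1+1) = (μ₁+μ₂) * sAux μ₁ μ₂ (τ+1) - (μ₁*μ₂) * sAux μ₁ μ₂ τ := by
  have h2 : μ₂^(τ+1) = sAux μ₁ μ₂ (τ+1) - μ₁ * sAux μ₁ μ₂ τ := by
    rw [sAux_succ]; ring
  have h1 : sAux μ₁ μ₂ (τ+1+1) = μ₂^(τ+1+1) + μ₁ * sAux μ₁ μ₂ (τ+1) := sAux_succ μ₁ μ₂ (τ+1)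
  rw [h1, pow_succ, h2]; ring

lemma pow_entries (μ₁ μ₂ : ℝ) (τ : ℕ) :
    ((!![μ₁+μ₂, -(μ₁*μ₂); 1, 0] : Matrix (Fin 2) (Fin 2) ℝ)^(τ+1)) 0 0 = sAux μ₁ μ₂ (τ+1) ∧
    ((!![μ₁+μ₂, -(μ₁*μ₂); 1, 0] : Matrix (Fin 2) (Fin 2) ℝ)^(τ+1)) 0 1 = -(μ₁*μ₂) * sAux μ₁ μ₂ τ := by
  induction τ with
  | zero =>
    constructor <;> simp [sAux_succ, sAux_zero] <;> ring
  | succ n ih =>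
    obtain ⟨ih1, ih2⟩ := ih
    rw [pow_succ]
    constructor
    · rw [Matrix.mul_apply, Fin.sum_univ_two, ih1, ih2]
      simp
      rw [sAux_rec]; ring
    · rw [Matrix.mul_apply, Fin.sum_univ_two, ih1, ih2]
      simp
      rw [sAux_succ]; ring

lemma sAux_lb {μ₁ μ₂ r : ℝ} (hr : 0 ≤ r) (hr1 : r ≤ μ₁) (hr2 : r^2 ≤ μ₁*μ₂)
    (hm2 : 0 ≤ μ₂) (τ : ℕ) :
    ((τ:ℝ)+1)/2 * r^τ ≤ sAux μ₁ μ₂ τ := by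
  have hμ1 : 0 ≤ μ₁ := le_trans hr hr1
  have hterm : ∀ i ∈ Finset.Ico ((τ+1)/2) (τ+1), r^τ ≤ μ₁^i * μ₂^(τ-i) := by
    intro i hi
    rw [Finset.mem_Ico] at hi
    have h2i : τ ≤ 2*i := by omega
    have hiτ : i ≤ τ := by omega
    have e1 : μ₁^i = μ₁^(2*i-τ) * μ₁^(τ-i) := by rw [← pow_add]; congr 1; omega
    have e2 : r^τ = r^(2*i-τ) * (r^2)^(τ-i) := by rw [← pow_mul, ← pow_add]; congr 1; omega
    rw [e1, mul_assoc, ← mul_pow, e2]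
    exact mul_le_mul (pow_le_pow_left₀ hr hr1 _) (pow_le_pow_left₀ (by positivity) hr2 _)
      (by positivity) (by positivity)
  have hsub : Finset.Ico ((τ+1)/2) (τ+1) ⊆ Finset.range (τ+1) := by
    intro i hi; rw [Finset.mem_Ico] at hi; exact Finset.mem_range.mpr hi.2
  have h1 : ∑ i ∈ Finset.Ico ((τ+1)/2) (τ+1), μ₁^i*μ₂^(τ-i) ≤ sAux μ₁ μ₂ τ :=
    Finset.sum_le_sum_of_subset_of_nonneg hsub (fun i _ _ => by positivity)
  have h2' : ((Finset.Ico ((τ+1)/2) (τ+1)).card : ℝ) * r^τ ≤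
      ∑ i ∈ Finset.Ico ((τ+1)/2) (τ+1), μ₁^i*μ₂^(τ-i) := by
    have := Finset.card_nsmul_le_sum _ _ _ hterm
    simpa [nsmul_eq_mul] using this
  have hcard : ((τ:ℝ)+1)/2 ≤ ((Finset.Ico ((τ+1)/2) (τ+1)).card : ℝ) := by
    rw [Nat.card_Ico]
    have h : τ+1 ≤ 2*((τ+1) - (τ+1)/2) := by omega
    have h' := (Nat.cast_le (α := ℝ)).mpr h
    push_cast at h'
    linarith
  calc ((τ:ℝ)+1)/2 * r^τ ≤ ((Finset.Ico ((τ+1)/2) (τ+1)).card : ℝ) * r^τ :=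
        mul_le_mul_of_nonneg_right hcard (by positivity)
    _ ≤ ∑ i ∈ Finset.Ico ((τ+1)/2) (τ+1), μ₁^i*μ₂^(τ-i) := h2'
    _ ≤ sAux μ₁ μ₂ τ := h1

lemma sum_lb (n : ℕ) : (n:ℝ)^2/2 ≤ ∑ τ ∈ Finset.range n, ((τ:ℝ)+1) := by
  induction n with
  | zero => simp
  | succ m ih =>
    rw [Finset.sum_range_succ]
    push_cast
    nlinarith

lemma exp_neg_two_le (θ : ℝ) (hθ : 0 < θ) (hθ4 : θ ≤ 1/4) : Real.exp (-(2*θ)) ≤ 1 - θ := by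
  have h1 := Real.add_one_le_exp (2*θ)
  have h2 : Real.exp (-(2*θ)) * Real.exp (2*θ) = 1 := by
    rw [← Real.exp_add]; simp
  nlinarith [mul_le_mul_of_nonneg_left h1 (Real.exp_pos (-(2*θ))).le,
    Real.exp_pos (-(2*θ)), Real.exp_pos (2*θ)]

set_option maxHeartbeats 2000000 in
theorem agd_partial_sum_lower_bound :
    ∃ c : ℝ, 0 < c ∧ ∀ (θ x : ℝ) (t : ℕ),
      0 < θ → θ ≤ 1/4 → -(1/4) ≤ x → x ≤ θ ^ 2 / (2 - θ) ^ 2 →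
      2 / θ + 1 ≤ (t : ℝ) →
      c / θ ^ 2 ≤ ∑ τ ∈ Finset.range t,
        (((!![(2 - θ) * (1 - x), -((1 - θ) * (1 - x)); 1, 0] :
            Matrix (Fin 2) (Fin 2) ℝ)) ^ τ) 0 0 := by
  refine ⟨Real.exp (-5), Real.exp_pos _, ?_⟩
  intro θ x t hθ hθ4 hx1 hx2 ht
  have h2θ : (0:ℝ) < 2 - θ := by linarith
  have hx2' : x * (2-θ)^2 ≤ θ^2 := (le_div_iff₀ (by positivity)).mp hx2
  have hx3 : x < 1 := by nlinarith
  set p : ℝ := (2-θ)*(1-x) with hp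
  set q : ℝ := (1-θ)*(1-x) with hq
  have hq0 : 0 ≤ q := by rw [hq]; nlinarith
  have hqθ : (1-θ)^2 ≤ q := by rw [hq]; nlinarith
  have hbr : 0 ≤ (1-x)*(2-θ)^2 - 4*(1-θ) := by nlinarith
  have hp0 : 0 ≤ p := by rw [hp]; nlinarith
  have hD : 4*q ≤ p^2 := by
    rw [hp, hq]
    nlinarith [mul_nonneg (by linarith : (0:ℝ) ≤ 1-x) hbr]
  set d : ℝ := Real.sqrt (p^2 - 4*q) with hd
  have hd0 : 0 ≤ d := Real.sqrt_nonneg _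
  have hd2 : d^2 = p^2 - 4*q := by rw [hd]; exact Real.sq_sqrt (by linarith)
  have hdp : d ≤ p := by
    rw [hd]
    calc Real.sqrt (p^2-4*q) ≤ Real.sqrt (p^2) := Real.sqrt_le_sqrt (by linarith)
      _ = p := Real.sqrt_sq hp0
  set μ₁ : ℝ := (p+d)/2 with hμ₁
  set μ₂ : ℝ := (p-d)/2 with hμ₂
  have hm2 : 0 ≤ μ₂ := by rw [hμ₂]; linarith
  have hm1 : 0 ≤ μ₁ := by rw [hμ₁]; linarith
  have hsum : μ₁ + μ₂ = p := by rw [hμ₁, hμ₂]; ring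
  have hprod : μ₁ * μ₂ = q := by
    rw [hμ₁, hμ₂]; linear_combination (-(1:ℝ)/4) * hd2
  have hr1 : 1 - θ ≤ μ₁ := by
    have hp2 : 2*(1-θ) ≤ p := by rw [hp]; nlinarith
    rw [hμ₁]; linarith
  have hr2 : (1-θ)^2 ≤ μ₁ * μ₂ := by rw [hprod]; exact hqθ
  have hrn : (0:ℝ) ≤ 1-θ := by linarith
  clear_value d μ₁ μ₂
  have hM : (!![p, -q; 1, 0] : Matrix (Fin 2) (Fin 2) ℝ) = !![μ₁+μ₂, -(μ₁*μ₂); 1, 0] := by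
    rw [hsum, hprod]
  rw [hM]
  have hA : ∀ τ : ℕ,
      ((!![μ₁+μ₂, -(μ₁*μ₂); 1, 0] : Matrix (Fin 2) (Fin 2) ℝ)^τ) 0 0 = sAux μ₁ μ₂ τ := by
    intro τ
    cases τ with
    | zero => simp [sAux_zero]
    | succ n => exact (pow_entries μ₁ μ₂ n).1
  simp only [hA]
  set t₀ : ℕ := ⌈2/θ⌉₊ with ht₀
  have ht₀l : 2/θ ≤ (t₀:ℝ) := Nat.le_ceil _
  have ht₀u : (t₀:ℝ) < 2/θ + 1 := Nat.ceil_lt_add_one (by positivity)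
  clear_value t₀
  have ht₀t : t₀ ≤ t := by
    have h : (t₀:ℝ) ≤ t := by linarith
    exact_mod_cast h
  have hnn : ∀ τ : ℕ, 0 ≤ sAux μ₁ μ₂ τ :=
    fun τ => Finset.sum_nonneg fun i _ => by positivity
  have hstep1 : ∑ τ ∈ Finset.range t₀, sAux μ₁ μ₂ τ ≤ ∑ τ ∈ Finset.range t, sAux μ₁ μ₂ τ :=
    Finset.sum_le_sum_of_subset_of_nonneg (Finset.range_subset_range.mpr ht₀t) (fun τ _ _ => hnn τ)
  have hexp : Real.exp (-(2*θ)) ≤ 1 - θ := exp_neg_two_le θ hθ hθ4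
  have hterm : ∀ τ ∈ Finset.range t₀, Real.exp (-5) * (((τ:ℝ)+1)/2) ≤ sAux μ₁ μ₂ τ := by
    intro τ hτ
    rw [Finset.mem_range] at hτ
    have hτ1 : (τ:ℝ) + 1 ≤ (t₀:ℝ) := by exact_mod_cast Nat.succ_le_of_lt hτ
    have hτr : (τ:ℝ) ≤ 2/θ := by linarith
    have hpow : Real.exp (-5) ≤ (1-θ)^τ := by
      have e1 : Real.exp (-(2*θ))^τ = Real.exp ((τ:ℝ) * -(2*θ)) :=
        (Real.exp_nat_mul _ τ).symm
      have hθτ : θ * (τ:ℝ) ≤ 2 := by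
        have := mul_le_mul_of_nonneg_left hτr hθ.le
        calc θ * (τ:ℝ) ≤ θ * (2/θ) := this
          _ = 2 := by field_simp
      have e2 : Real.exp (-5) ≤ Real.exp ((τ:ℝ) * -(2*θ)) := by
        apply Real.exp_le_exp.mpr
        nlinarith
      calc Real.exp (-5) ≤ Real.exp (-(2*θ))^τ := by rw [e1]; exact e2
        _ ≤ (1-θ)^τ := pow_le_pow_left₀ (Real.exp_pos _).le hexp τ
    calc Real.exp (-5) * (((τ:ℝ)+1)/2)
        ≤ (1-θ)^τ * (((τ:ℝ)+1)/2) :=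
          mul_le_mul_of_nonneg_right hpow (by positivity)
      _ = ((τ:ℝ)+1)/2 * (1-θ)^τ := by ring
      _ ≤ sAux μ₁ μ₂ τ := sAux_lb hrn hr1 hr2 hm2 τ
  have h4 : ∑ τ ∈ Finset.range t₀, Real.exp (-5) * (((τ:ℝ)+1)/2)
      = Real.exp (-5)/2 * ∑ τ ∈ Finset.range t₀, ((τ:ℝ)+1) := by
    rw [Finset.mul_sum]
    exact Finset.sum_congr rfl fun i _ => by ring
  have h5 := sum_lb t₀
  have h6 : 4/θ^2 ≤ (t₀:ℝ)^2 := by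
    have h := pow_le_pow_left₀ (by positivity : (0:ℝ) ≤ 2/θ) ht₀l 2
    calc 4/θ^2 = (2/θ)^2 := by field_simp; ring
      _ ≤ (t₀:ℝ)^2 := h
  have hG : 2/θ^2 ≤ ∑ τ ∈ Finset.range t₀, ((τ:ℝ)+1) := by
    have h7 : (0:ℝ) < θ^2 := by positivity
    rw [div_le_iff₀ h7] at h6 ⊢
    nlinarith
  have hmain : Real.exp (-5) / θ^2 ≤ ∑ τ ∈ Finset.range t₀, sAux μ₁ μ₂ τ := by
    calc Real.exp (-5)/θ^2 = Real.exp (-5)/2 * (2/θ^2) := by ring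
      _ ≤ Real.exp (-5)/2 * ∑ τ ∈ Finset.range t₀, ((τ:ℝ)+1) :=
          mul_le_mul_of_nonneg_left hG (by positivity)
      _ = ∑ τ ∈ Finset.range t₀, Real.exp (-5) * (((τ:ℝ)+1)/2) := h4.symm
      _ ≤ ∑ τ ∈ Finset.range t₀, sAux μ₁ μ₂ τ := Finset.sum_le_sum hterm
  linarith
end
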